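/- arXiv:1408.3543 — 3 statements merged into one kernel-verified Lean document; each statement's English description precedes it below -/
import Mathlib

section
/- For all nonnegative integers B and integers n ≥ 2, the sum over i from 0 to B-1 of i * C(i+n-2, n-2) equals (1/n) * B * (B-1) * C(B+n-2, n-2), i.e., n * Σ_{i=0}^{B-1} i * C(i+n-2, n-2) = B*(B-1)*C(B+n-2, n-2). -/
theorem stmt_0 (n B : ℕ) (hn : 2 ≤ n) :
    n * ∑ i ∈ Finset.range B, i * Nat.choose (i + n - 2) (n - 2) =
      B * (B - 1) * Nat.choose (B + n - 2) (n - 2) := by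
  obtain ⟨m, rfl⟩ := Nat.exists_eq_add_of_le hn
  simp only [Nat.add_sub_cancel_left, show ∀ i : ℕ, i + (2 + m) - 2 = i + m from fun i => by omega]
  induction B with
  | zero => simp
  | succ B ih =>
    rw [Finset.sum_range_succ, Nat.mul_add, ih, Nat.add_succ_sub_one]
    have key : (B + m + 1) * Nat.choose (B + m) m = Nat.choose (B + m + 1) m * (B + 1) := by
      have h1 : Nat.choose (B + m) m = Nat.choose (B + m) B := by
        rw [← Nat.choose_symm (Nat.le_add_left m B)]; congr 1; omega
      have h2 : Nat.choose (B + m + 1) m = Nat.choose (B + m + 1) (B + 1) := by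
        rw [← Nat.choose_symm (by omega)]; congr 1; omega
      rw [h1, h2]
      exact Nat.add_one_mul_choose_eq (B + m) B
    cases B with
    | zero => simp
    | succ k =>
      simp only [Nat.succ_sub_one] at *
      rw [show k + 1 + 1 + m = k + 1 + m + 1 from by omega]
      nlinarith [key]
end

section
/- For nonnegative integers A and B, and an integer n ≥ 2, the sum over i from A to A+B-1 of (i-1) * C(i+n-2-A, n-2) equals (1/n) * C(B+n-2, n-1) * (n*A + (n-1)*B - 2n + 1); equivalently n * Σ_{i=A}^{A+B-1} (i-1)*C(i+n-2-A, n-2) = C(B+n-2, n-1) * (n*A + (n-1)*B - 2*n + 1). -/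
theorem stmt_1 (n A B : ℕ) (hn : 2 ≤ n) :
    (n : ℤ) * ∑ i ∈ Finset.range B,
        ((A : ℤ) + i - 1) * (Nat.choose (i + n - 2) (n - 2) : ℤ) =
      (Nat.choose (B + n - 2) (n - 1) : ℤ) *
        ((n : ℤ) * A + ((n : ℤ) - 1) * B - 2 * n + 1) := by
  obtain ⟨m, rfl⟩ : ∃ m, n = m + 2 := ⟨n - 2, by omega⟩
  simp only [show ∀ k : ℕ, k + (m + 2) - 2 = k + m by intro k; omega,
    show m + 2 - 2 = m from rfl, show m + 2 - 1 = m + 1 from rfl]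
  induction B with
  | zero => simp [Nat.choose_eq_zero_of_lt]
  | succ B ih =>
    rw [Finset.sum_range_succ, mul_add, ih]
    have h1 : (Nat.choose (B + 1 + m) (m + 1) : ℤ)
        = Nat.choose (B + m) m + Nat.choose (B + m) (m + 1) := by
      have := Nat.choose_succ_succ (B + m) m
      rw [show B + 1 + m = B + m + 1 by omega, this]
      push_cast; ring
    have h2 : (Nat.choose (B + m) (m + 1) : ℤ) * (m + 1)
        = Nat.choose (B + m) m * B := by
      have := Nat.choose_succ_right_eq (B + m) m
      have hb : B + m - m = B := by omega
      rw [hb] at this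
      exact_mod_cast congrArg (Nat.cast : ℕ → ℤ) this
    push_cast

    push_cast at h1 h2
    linear_combination (-(((m : ℤ) + 2) * A + ((m : ℤ) + 1) * (B + 1) - 2 * ((m:ℤ) + 2) + 1)) * h1 - h2
end

section
/- Let I ⊆ k[x_0, x_1, y] be a monomial ideal such that for some integer i ≥ 0, I contains all monomials x_0^{i-t} x_1^{t} for t = 0, ..., i. Then the number of monomials of degree i+1 in I is at least i + 2 more than the number of monomials of degree i in I, i.e., dim_k I^{(i+1)} ≥ dim_k I^{(i)} + i + 2. -/
/-!
Multiplication by `y` embeds `I^{(i)}` into `I^{(i+1)}`, and its image consists of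
polynomials all of whose monomials are divisible by `y`. The `i + 2` monomials
`x₀^{i+1-t} x₁^t`, `t ≤ i + 1`, lie in `I^{(i+1)}` (each is `x₀` or `x₁` times a monomial
of the hypothesis) and are not divisible by `y`, so they span a subspace of dimension
`i + 2` of `I^{(i+1)}` meeting that image only in `0`.
-/

/-- The degree-`l` graded piece of an ideal of `k[x₀, x₁, y]`, as a `k`-subspace. -/
noncomputable def gradedPiece3 (k : Type) [Field k]
    (I : Ideal (MvPolynomial (Fin 3) k)) (l : ℕ) :
    Submodule k (MvPolynomial (Fin 3) k) :=
  I.restrictScalars k ⊓ MvPolynomial.homogeneousSubmodule (Fin 3) k l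

open MvPolynomial Module Submodule

theorem Submodule.finrank_add_finrank_le_of_disjoint_of_le {K V : Type*} [DivisionRing K]
    [AddCommGroup V] [Module K V] {M W T : Submodule K V} [FiniteDimensional K T]
    (hM : M ≤ T) (hW : W ≤ T) (h : Disjoint M W) :
    finrank K M + finrank K W ≤ finrank K T := by
  have := finiteDimensional_of_le hM
  have := finiteDimensional_of_le hW
  have hsum := finrank_sup_add_finrank_inf_eq M W
  rw [h.eq_bot, finrank_bot, add_zero] at hsum
  exact hsum ▸ finrank_mono (sup_le hM hW)

namespace MvPolynomial

variable {σ R : Type*}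

theorem disjoint_range_mulLeft_X_restrictSupport [CommSemiring R] (j : σ) :
    Disjoint (LinearMap.range (LinearMap.mulLeft R (X j : MvPolynomial σ R)))
      (restrictSupport R {m | m j = 0}) := by
  classical
  rw [disjoint_def]
  rintro _ ⟨q, rfl⟩ hq
  ext m
  by_cases hm : m j = 0
  · simp [coeff_X_mul', hm]
  · exact notMem_support_iff.mp fun hmem => hm ((mem_restrictSupport_iff R).mp hq hmem)

variable {k : Type*} [Field k] (I : Ideal (MvPolynomial σ k))

instance finiteDimensional_ideal_inf_homogeneousSubmodule [Finite σ] (l : ℕ) :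
    FiniteDimensional k (I.restrictScalars k ⊓ homogeneousSubmodule σ k l :
      Submodule k (MvPolynomial σ k)) :=
  haveI : FiniteDimensional k (homogeneousSubmodule σ k l) :=
    Module.Finite.iff_fg.mpr (homogeneousSubmodule_fg σ k l)
  finiteDimensional_of_le inf_le_right

theorem map_mulLeft_X_ideal_inf_homogeneousSubmodule_le (j : σ) (l : ℕ) :
    (I.restrictScalars k ⊓ homogeneousSubmodule σ k l).map (LinearMap.mulLeft k (X j)) ≤
      I.restrictScalars k ⊓ homogeneousSubmodule σ k (l + 1) := by
  rintro _ ⟨p, ⟨hpI, hp⟩, rfl⟩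
  refine ⟨I.mul_mem_left _ hpI, ?_⟩
  rw [SetLike.mem_coe, mem_homogeneousSubmodule, add_comm]
  exact (isHomogeneous_X k j).mul hp

theorem restrictSupport_le_ideal_inf_homogeneousSubmodule {s : Set (σ →₀ ℕ)} {l : ℕ}
    (hs : ∀ m ∈ s, m.degree = l ∧ monomial m 1 ∈ I) :
    restrictSupport k s ≤ I.restrictScalars k ⊓ homogeneousSubmodule σ k l := by
  rw [restrictSupport_eq_span, span_le]
  rintro _ ⟨m, hm, rfl⟩
  exact ⟨(hs m hm).2, isHomogeneous_monomial _ (hs m hm).1⟩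

theorem finrank_ideal_inf_homogeneousSubmodule_add_card_le [Finite σ]
    (j : σ) (l : ℕ) (s : Finset (σ →₀ ℕ))
    (hs : ∀ m ∈ s, m j = 0 ∧ m.degree = l + 1 ∧ monomial m 1 ∈ I) :
    finrank k (I.restrictScalars k ⊓ homogeneousSubmodule σ k l :
        Submodule k (MvPolynomial σ k)) + s.card ≤
      finrank k (I.restrictScalars k ⊓ homogeneousSubmodule σ k (l + 1) :
        Submodule k (MvPolynomial σ k)) := by
  have hinj : Function.Injective (LinearMap.mulLeft k (X j : MvPolynomial σ k)) :=
    fun _ _ h => mul_left_cancel₀ (X_ne_zero j) h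
  have hcard : finrank k (restrictSupport k (s : Set (σ →₀ ℕ))) = s.card := by
    simp [finrank_eq_card_basis (basisRestrictSupport k _)]
  rw [← hcard, (equivMapOfInjective _ hinj _).finrank_eq]
  refine finrank_add_finrank_le_of_disjoint_of_le
    (map_mulLeft_X_ideal_inf_homogeneousSubmodule_le I j l)
    (restrictSupport_le_ideal_inf_homogeneousSubmodule I fun m hm => (hs m hm).2) ?_
  exact (disjoint_range_mulLeft_X_restrictSupport j).mono
    LinearMap.map_le_range (restrictSupport_mono k fun m hm => (hs m hm).1)

end MvPolynomial

theorem monomial_row_succ_mem {R : Type*} [CommSemiring R] (I : Ideal (MvPolynomial (Fin 3) R))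
    {i : ℕ} (hrow : ∀ t : ℕ, t ≤ i →
      monomial (Finsupp.single (0 : Fin 3) (i - t) + Finsupp.single (1 : Fin 3) t) (1 : R) ∈ I)
    {t : ℕ} (ht : t ≤ i + 1) :
    monomial (Finsupp.single 0 (i + 1 - t) + Finsupp.single 1 t) (1 : R) ∈ I := by
  rcases ht.lt_or_eq with ht | rfl
  · have hexp : Finsupp.single (0 : Fin 3) (i + 1 - t) + Finsupp.single 1 t =
        Finsupp.single 0 1 + (Finsupp.single 0 (i - t) + Finsupp.single 1 t) := by
      rw [← add_assoc, ← Finsupp.single_add]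
      congr 2
      omega
    rw [hexp, monomial_single_add, pow_one]
    exact I.mul_mem_left _ (hrow t (by omega))
  · have hexp : Finsupp.single (0 : Fin 3) (i + 1 - (i + 1)) + Finsupp.single 1 (i + 1) =
        Finsupp.single 1 1 + (Finsupp.single 0 (i - i) + Finsupp.single 1 i) := by
      simp only [Nat.sub_self, Finsupp.single_zero, zero_add]
      rw [← Finsupp.single_add, add_comm]
    rw [hexp, monomial_single_add, pow_one]
    exact I.mul_mem_left _ (hrow i le_rfl)

theorem stmt_12_general (k : Type) [Field k] (I : Ideal (MvPolynomial (Fin 3) k))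
    (i : ℕ)
    (hrow : ∀ t : ℕ, t ≤ i →
      MvPolynomial.monomial (Finsupp.single (0 : Fin 3) (i - t) +
        Finsupp.single (1 : Fin 3) t) (1 : k) ∈ I) :
    Module.finrank k (gradedPiece3 k I i) + i + 2 ≤
      Module.finrank k (gradedPiece3 k I (i + 1)) := by
  let row : ℕ → Fin 3 →₀ ℕ := fun t => Finsupp.single 0 (i + 1 - t) + Finsupp.single 1 t
  have hrow_inj : Set.InjOn row (Finset.range (i + 2)) := fun s _ t _ h => by
    simpa [row] using congrArg (· 1) h
  have key := finrank_ideal_inf_homogeneousSubmodule_add_card_le I 2 i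
    ((Finset.range (i + 2)).image row) <| by
      simp only [Finset.mem_image, Finset.mem_range]
      rintro _ ⟨t, ht, rfl⟩
      refine ⟨by simp [row], ?_, monomial_row_succ_mem I hrow (by omega)⟩
      simp only [row, map_add, Finsupp.degree_single]
      omega
  rw [Finset.card_image_of_injOn hrow_inj, Finset.card_range] at key
  unfold gradedPiece3
  omega

/-- If a monomial ideal `I ⊆ k[x₀, x₁, y]` contains all monomials `x₀^{i-t} x₁^t`
for `t = 0, …, i`, then `dim_k I^{(i+1)} ≥ dim_k I^{(i)} + i + 2`. -/
theorem stmt_12 (k : Type) [Field k] (I : Ideal (MvPolynomial (Fin 3) k))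
    (hmono : ∀ p ∈ I, ∀ m ∈ p.support, MvPolynomial.monomial m (1 : k) ∈ I)
    (i : ℕ)
    (hrow : ∀ t : ℕ, t ≤ i →
      MvPolynomial.monomial (Finsupp.single (0 : Fin 3) (i - t) +
        Finsupp.single (1 : Fin 3) t) (1 : k) ∈ I) :
    Module.finrank k (gradedPiece3 k I i) + i + 2 ≤
      Module.finrank k (gradedPiece3 k I (i + 1)) :=
  stmt_12_general k I i hrow
end
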